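/- For any ideal $I$ of $R$, the set $I_{S\mathcal{H}} = \{a \in R : h_Y(F) \subseteq h_Y(a) \text{ for some finite subset } F \text{ of } I\}$ is the smallest strong $\mathcal{H}_Y$-ideal of $R$ containing $I$; moreover $I_{S\mathcal{H}} = \bigcup_F k(h_Y(F))$, where the union ranges over all finite subsets $F$ of $I$. -/

import Mathlib

/-- `hSet Y S` is the set of primes (ideals) in `Y` containing the subset `S`. -/
def hSet {R : Type*} [CommRing R] (Y : Set (Ideal R)) (S : Set R) : Set (Ideal R) :=
  {P ∈ Y | S ⊆ (P : Set R)}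

/-- `kSet 𝒮` is the intersection of the ideals in `𝒮` (the whole ring if `𝒮 = ∅`). -/
def kSet {R : Type*} [CommRing R] (𝒮 : Set (Ideal R)) : Ideal R := sInf 𝒮

/-- An `ℋ_Y`-ideal. -/
def IsHIdeal {R : Type*} [CommRing R] (Y : Set (Ideal R)) (I : Ideal R) : Prop :=
  ∀ a ∈ I, ∀ b : R, hSet Y {a} ⊆ hSet Y {b} → b ∈ I

/-- A strong `ℋ_Y`-ideal. -/
def IsStrongHIdeal {R : Type*} [CommRing R] (Y : Set (Ideal R)) (I : Ideal R) : Prop :=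
  ∀ F : Set R, F.Finite → F ⊆ (I : Set R) → ∀ b : R, hSet Y F ⊆ hSet Y {b} → b ∈ I

/-- A `Y`-Hilbert ideal. -/
def IsYHilbert {R : Type*} [CommRing R] (Y : Set (Ideal R)) (I : Ideal R) : Prop :=
  I = kSet (hSet Y (I : Set R))

/-!
`h_Y` and `k` form a Galois connection: `h_Y(G) ⊆ h_Y(F)` iff `F ⊆ k(h_Y(G))`. Hence the
defining condition of `I_{Sℋ}` reads `a ∈ k(h_Y(F))`, and `I_{Sℋ}` is the union of the ideals
`k(h_Y(F))`, which is directed because `F ↦ k(h_Y(F))` is monotone. A finite subset of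
`I_{Sℋ}` therefore lies in a single `k(h_Y(G))`, which gives the strong `ℋ_Y` property;
minimality is immediate from the definition.
-/

namespace StrongHIdeal

open Set

variable {R : Type*} [CommRing R] {Y : Set (Ideal R)}

theorem hSet_subset_hSet_iff {F G : Set R} :
    hSet Y G ⊆ hSet Y F ↔ F ⊆ kSet (hSet Y G) := by
  constructor
  · intro h f hf
    exact Ideal.mem_sInf.mpr fun {P} hP => (h hP).2 hf
  · intro h P hP
    exact ⟨hP.1, fun f hf => Ideal.mem_sInf.mp (h hf) hP⟩

theorem hSet_subset_hSet_singleton_iff {F : Set R} {a : R} :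
    hSet Y F ⊆ hSet Y {a} ↔ a ∈ kSet (hSet Y F) := by
  rw [hSet_subset_hSet_iff, singleton_subset_iff, SetLike.mem_coe]

theorem kSet_hSet_mono {F G : Set R} (h : F ⊆ G) : kSet (hSet Y F) ≤ kSet (hSet Y G) :=
  sInf_le_sInf fun _ hP => ⟨hP.1, h.trans hP.2⟩

variable (Y) in
/-- The ideal `I_{Sℋ}`, presented as the union of the ideals `k(h_Y(F))`. -/
def strongHClosure (I : Ideal R) : Ideal R where
  carrier := {a | ∃ F : Set R, F.Finite ∧ F ⊆ I ∧ a ∈ kSet (hSet Y F)}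
  zero_mem' := ⟨∅, finite_empty, empty_subset _, zero_mem _⟩
  add_mem' := by
    rintro a b ⟨F, hF, hFI, ha⟩ ⟨G, hG, hGI, hb⟩
    exact ⟨F ∪ G, hF.union hG, union_subset hFI hGI,
      add_mem (kSet_hSet_mono subset_union_left ha) (kSet_hSet_mono subset_union_right hb)⟩
  smul_mem' := by
    rintro c a ⟨F, hF, hFI, ha⟩
    exact ⟨F, hF, hFI, Ideal.mul_mem_left _ c ha⟩

variable {I : Ideal R}

theorem mem_strongHClosure {a : R} :
    a ∈ strongHClosure Y I ↔ ∃ F : Set R, F.Finite ∧ F ⊆ I ∧ a ∈ kSet (hSet Y F) :=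
  Iff.rfl

theorem exists_subset_kSet_hSet_of_finite {F : Set R} (hF : F.Finite)
    (hFI : F ⊆ strongHClosure Y I) :
    ∃ G : Set R, G.Finite ∧ G ⊆ I ∧ F ⊆ kSet (hSet Y G) := by
  induction F, hF using Set.Finite.induction_on with
  | empty => exact ⟨∅, finite_empty, empty_subset _, empty_subset _⟩
  | @insert a s _ _ ih =>
    obtain ⟨Ga, hGa, hGaI, ha⟩ := hFI (mem_insert a s)
    obtain ⟨Gs, hGs, hGsI, hs⟩ := ih ((subset_insert a s).trans hFI)
    refine ⟨Ga ∪ Gs, hGa.union hGs, union_subset hGaI hGsI, insert_subset ?_ ?_⟩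
    · exact kSet_hSet_mono subset_union_left ha
    · exact hs.trans (kSet_hSet_mono subset_union_right)

theorem isStrongHIdeal_strongHClosure : IsStrongHIdeal Y (strongHClosure Y I) := by
  intro F hF hFJ b hb
  obtain ⟨G, hG, hGI, hFG⟩ := exists_subset_kSet_hSet_of_finite hF hFJ
  exact ⟨G, hG, hGI, hSet_subset_hSet_singleton_iff.mp
    ((hSet_subset_hSet_iff.mpr hFG).trans hb)⟩

theorem le_strongHClosure : I ≤ strongHClosure Y I := fun a ha =>
  ⟨{a}, finite_singleton a, singleton_subset_iff.mpr ha,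
    hSet_subset_hSet_singleton_iff.mp subset_rfl⟩

theorem strongHClosure_le {K : Ideal R} (hK : IsStrongHIdeal Y K) (hIK : I ≤ K) :
    strongHClosure Y I ≤ K := by
  rintro a ⟨F, hF, hFI, ha⟩
  exact hK F hF (hFI.trans hIK) a (hSet_subset_hSet_singleton_iff.mpr ha)

end StrongHIdeal

open StrongHIdeal in
theorem stmt10_general {R : Type*} [CommRing R] (Y : Set (Ideal R))
    (I : Ideal R) :
    ∃ J : Ideal R,
      (J : Set R) =
        {a : R | ∃ F : Set R, F.Finite ∧ F ⊆ (I : Set R) ∧ hSet Y F ⊆ hSet Y {a}} ∧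
      IsStrongHIdeal Y J ∧ I ≤ J ∧
      (∀ K : Ideal R, IsStrongHIdeal Y K → I ≤ K → J ≤ K) ∧
      (J : Set R) =
        ⋃ F ∈ {F : Set R | F.Finite ∧ F ⊆ (I : Set R)}, (kSet (hSet Y F) : Set R) := by
  refine ⟨strongHClosure Y I, ?_, isStrongHIdeal_strongHClosure, le_strongHClosure,
    fun K hK hIK => strongHClosure_le hK hIK, ?_⟩
  · ext a
    simp only [SetLike.mem_coe, mem_strongHClosure, Set.mem_ofPred_eq,
      hSet_subset_hSet_singleton_iff]
  · ext a
    simp only [SetLike.mem_coe, mem_strongHClosure, Set.mem_iUnion, Set.mem_ofPred_eq,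
      exists_prop, and_assoc]

/-- `I_{Sℋ} = {a : h_Y(F) ⊆ h_Y(a) for some finite F ⊆ I}` is the
smallest strong `ℋ_Y`-ideal containing `I`, and it equals the union of the ideals
`k(h_Y(F))` over all finite `F ⊆ I`. -/
theorem stmt10 {R : Type*} [CommRing R] (Y : Set (Ideal R))
    (hprime : ∀ P ∈ Y, P.IsPrime) (I : Ideal R) :
    ∃ J : Ideal R,
      (J : Set R) =
        {a : R | ∃ F : Set R, F.Finite ∧ F ⊆ (I : Set R) ∧ hSet Y F ⊆ hSet Y {a}} ∧
      IsStrongHIdeal Y J ∧ I ≤ J ∧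
      (∀ K : Ideal R, IsStrongHIdeal Y K → I ≤ K → J ≤ K) ∧
      (J : Set R) =
        ⋃ F ∈ {F : Set R | F.Finite ∧ F ⊆ (I : Set R)}, (kSet (hSet Y F) : Set R) :=
  stmt10_general Y I
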